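/- arXiv:1607.04384 — 8 statements merged into one kernel-verified Lean document; each statement's English description precedes it below -/
import Mathlib

section
/- For any real numbers a_1,…,a_n and A_1,…,A_n, the determinant of the E_n-matrix equals ∏_{m=1}^n (A_m − a_m²). -/
open Finset

/-- The `E_n`-matrix generated by `a_1,…,a_n` and `A_1,…,A_n`:
an `(n+1)×(n+1)` real matrix with entry `(1,1) = 1`, entries `(1,j+1) = (j+1,1) = a_j`,
diagonal entries `(i+1,i+1) = A_i`, and off-diagonal entries `(i+1,j+1) = a_i * a_j` for `i ≠ j`. -/
def Emat {n : ℕ} (a A : Fin n → ℝ) : Matrix (Fin (n + 1)) (Fin (n + 1)) ℝ :=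
  Matrix.of fun i j =>
    Fin.cases
      (Fin.cases (1 : ℝ) (fun j' => a j') j)
      (fun i' => Fin.cases (a i') (fun j' => if i' = j' then A i' else a i' * a j') j)
      i

/-! Moving the first index to the end turns `Emat a A` into the block matrix
`[[D + a aᵀ, a], [aᵀ, 1]]` with `D = diagonal (A - a²)`, whose Schur complement with respect to
the corner `1` is `D`. -/

open Matrix

theorem Matrix.det_fromBlocks_add_mul_one {α m n : Type*} [CommRing α] [Fintype m] [DecidableEq m]
    [Fintype n] [DecidableEq n] (D : Matrix m m α) (B : Matrix m n α) (C : Matrix n m α) :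
    (fromBlocks (D + B * C) B C 1).det = D.det := by
  rw [det_fromBlocks_one₂₂, add_sub_cancel_right]

def finSuccEquivSumUnit (n : ℕ) : Fin (n + 1) ≃ Fin n ⊕ Unit :=
  (finSuccEquiv n).trans (Equiv.optionEquivSumPUnit (Fin n))

theorem Emat_eq_reindex_fromBlocks {n : ℕ} (a A : Fin n → ℝ) :
    Emat a A = reindex (finSuccEquivSumUnit n).symm (finSuccEquivSumUnit n).symm
      (fromBlocks (diagonal (A - a ^ 2) + replicateCol Unit a * replicateRow Unit a)
        (replicateCol Unit a) (replicateRow Unit a) 1) := by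
  ext i j
  cases i using Fin.cases <;> cases j using Fin.cases <;>
    simp [Emat, finSuccEquivSumUnit, diagonal_apply, mul_apply]
  split_ifs with h
  · subst h
    ring
  · ring

/-- The determinant of the `E_n`-matrix equals `∏_{m=1}^n (A_m − a_m²)`. -/
theorem Emat_det {n : ℕ} (a A : Fin n → ℝ) :
    (Emat a A).det = ∏ m : Fin n, (A m - a m ^ 2) := by
  rw [Emat_eq_reindex_fromBlocks, det_reindex_self, det_fromBlocks_add_mul_one, det_diagonal]
  rfl
end

section
/- For any real numbers a_1,…,a_n and A_1,…,A_n, and any indices i, j with 1 ≤ i, j ≤ n and i ≠ j, the cofactor C_{i+1,j+1} of the E_n-matrix equals 0. -/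
open Finset

/-- The cofactor of the `(k,l)` entry of a square matrix: `(−1)^{k+l}` times the determinant of
the matrix obtained by deleting the `k`-th row and `l`-th column. -/
def cofactor {n : ℕ} (M : Matrix (Fin (n + 1)) (Fin (n + 1)) ℝ) (k l : Fin (n + 1)) : ℝ :=
  (-1 : ℝ) ^ ((k : ℕ) + (l : ℕ)) * (M.submatrix k.succAbove l.succAbove).det

theorem Matrix.det_eq_zero_of_row_eq_smul {ι R : Type*} [Fintype ι] [DecidableEq ι] [CommRing R]
    {M : Matrix ι ι R} {i j : ι} (hij : i ≠ j) (c : R) (h : M i = c • M j) : M.det = 0 := by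
  rw [← M.updateRow_eq_self i, h, det_updateRow_smul, det_updateRow_eq_zero hij.symm, mul_zero]

theorem Emat_succ_apply_of_ne {n : ℕ} (a A : Fin n → ℝ) {j : Fin n} {c : Fin (n + 1)}
    (hc : c ≠ j.succ) : Emat a A j.succ c = a j * Emat a A 0 c := by
  cases c using Fin.cases with
  | zero => simp [Emat]
  | succ l => simp [Emat, show j ≠ l from fun h => hc (h ▸ rfl)]

/-- For `1 ≤ i, j ≤ n` with `i ≠ j`, the cofactor `C_{i+1,j+1}` of the `E_n`-matrix equals `0`. -/
theorem Emat_cofactor_succ_succ {n : ℕ} (a A : Fin n → ℝ) (i j : Fin n) (hij : i ≠ j) :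
    cofactor (Emat a A) i.succ j.succ = 0 := by
  obtain ⟨r, hr⟩ : ∃ r, i.succ.succAbove r = j.succ :=
    Fin.exists_succAbove_eq ((Fin.succ_injective _).ne hij.symm)
  obtain ⟨r₀, hr₀⟩ : ∃ r₀, i.succ.succAbove r₀ = 0 :=
    Fin.exists_succAbove_eq (Fin.succ_ne_zero i).symm
  have hne : r ≠ r₀ := fun h => Fin.succ_ne_zero j (hr ▸ hr₀ ▸ congrArg _ h)
  have hrow : (Emat a A).submatrix i.succ.succAbove j.succ.succAbove r =
      a j • (Emat a A).submatrix i.succ.succAbove j.succ.succAbove r₀ := by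
    funext c
    simp only [Matrix.submatrix_apply, hr, hr₀, Pi.smul_apply, smul_eq_mul]
    exact Emat_succ_apply_of_ne a A (Fin.succAbove_ne _ _)
  rw [cofactor, Matrix.det_eq_zero_of_row_eq_smul hne _ hrow, mul_zero]
end

section
/- For any real numbers a_1,…,a_n and A_1,…,A_n, and any index j with 1 ≤ j ≤ n, the cofactor C_{1,j+1} of the E_n-matrix equals −a_j · ∏_{k≠j} (A_k − a_k²), where the product is over k ∈ {1,…,n} with k ≠ j. -/
/-!
Deleting the first row and the `(j+1)`-st column of the `E_n`-matrix and then moving the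
surviving first column `a` to position `j` (a cyclic permutation of sign `(-1)^j`) leaves
`diag(A_k - a_k²) + a aᵀ` with its `j`-th column replaced by `a`. Subtracting `a_k` times
column `j` from each other column `k` removes the rank-one part, and the determinant of the
resulting diagonal-plus-one-column matrix is `a_j ∏_{k ≠ j} (A_k - a_k²)`.
-/

open Finset

namespace Matrix

variable {ι R : Type*} [Fintype ι] [DecidableEq ι] [CommRing R]

theorem det_one_updateRow (j : ι) (u : ι → R) :
    ((1 : Matrix ι ι R).updateRow j u).det = u j := by
  rw [← det_transpose, ← updateCol_transpose, transpose_one, ← cramer_apply, cramer_one]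
  rfl

theorem det_diagonal_updateCol (d v : ι → R) (j : ι) :
    ((diagonal d).updateCol j v).det = (∏ k ∈ univ.erase j, d k) * v j := by
  rw [← cramer_apply, cramer_eq_adjugate_mulVec, adjugate_diagonal, mulVec_diagonal]

theorem updateCol_add_vecMulVec_self (M : Matrix ι ι R) (v w : ι → R) (j : ι) :
    (M + vecMulVec v w).updateCol j v =
      M.updateCol j v * (1 : Matrix ι ι R).updateRow j (Function.update w j 1) := by
  ext i k
  have hrest : ∑ l ∈ univ.erase j,
      M.updateCol j v i l * (1 : Matrix ι ι R).updateRow j (Function.update w j 1) l k =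
        if k = j then 0 else M i k := by
    rw [sum_congr rfl fun l hl => by
      rw [updateCol_ne (ne_of_mem_erase hl), updateRow_ne (ne_of_mem_erase hl), one_apply,
        mul_ite, mul_one, mul_zero]]
    simp [eq_comm]
  rw [mul_apply, ← add_sum_erase _ _ (mem_univ j), hrest]
  rcases eq_or_ne k j with rfl | hkj
  · simp
  · simp [hkj, vecMulVec_apply, add_comm]

theorem det_updateCol_add_vecMulVec_self (M : Matrix ι ι R) (v w : ι → R) (j : ι) :
    ((M + vecMulVec v w).updateCol j v).det = (M.updateCol j v).det := by
  rw [updateCol_add_vecMulVec_self, det_mul, det_one_updateRow, Function.update_self, mul_one]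

end Matrix

section

open Matrix

theorem Emat_succ_zero {n : ℕ} (a A : Fin n → ℝ) (i : Fin n) : Emat a A i.succ 0 = a i := rfl

theorem Emat_succ_succ {n : ℕ} (a A : Fin n → ℝ) (i k : Fin n) :
    Emat a A i.succ k.succ = (diagonal (fun k => A k - a k ^ 2) + vecMulVec a a) i k := by
  rcases eq_or_ne i k with rfl | hik
  · simp [Emat, vecMulVec_apply, sq]
  · simp [Emat, vecMulVec_apply, hik]

theorem Emat_submatrix_succ_cycleRange {n : ℕ} (a A : Fin n → ℝ) (j : Fin n) :
    (Emat a A).submatrix Fin.succ (j.succ.succAbove ∘ j.cycleRange) =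
      (diagonal (fun k => A k - a k ^ 2) + vecMulVec a a).updateCol j a := by
  ext i k
  rw [submatrix_apply, Function.comp_apply, Fin.succAbove_cycleRange]
  rcases eq_or_ne k j with rfl | hkj
  · rw [Equiv.swap_apply_right, Emat_succ_zero, updateCol_self]
  · rw [Equiv.swap_apply_of_ne_of_ne k.succ_ne_zero ((Fin.succ_injective _).ne hkj),
      Emat_succ_succ, updateCol_ne hkj]

theorem det_Emat_submatrix_zero_succ {n : ℕ} (a A : Fin n → ℝ) (j : Fin n) :
    ((Emat a A).submatrix (0 : Fin (n + 1)).succAbove j.succ.succAbove).det =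
      (-1) ^ (j : ℕ) * (a j * ∏ k ∈ univ.erase j, (A k - a k ^ 2)) := by
  set N := (Emat a A).submatrix (0 : Fin (n + 1)).succAbove j.succ.succAbove
  have hN : N.submatrix id j.cycleRange =
      (diagonal (fun k => A k - a k ^ 2) + vecMulVec a a).updateCol j a := by
    rw [← Emat_submatrix_succ_cycleRange, submatrix_submatrix, Fin.succAbove_zero]
    rfl
  calc N.det = ((N.submatrix id j.cycleRange).submatrix id j.cycleRange.symm).det := by
        simp
    _ = _ := by
        rw [det_permute', Equiv.Perm.sign_symm, Fin.sign_cycleRange, hN,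
          det_updateCol_add_vecMulVec_self, det_diagonal_updateCol, mul_comm (a j)]
        push_cast
        rfl

end

/-- For `1 ≤ j ≤ n`, the cofactor `C_{1,j+1}` of the `E_n`-matrix equals
`−a_j · ∏_{k ≠ j} (A_k − a_k²)`. -/
theorem Emat_cofactor_one_succ {n : ℕ} (a A : Fin n → ℝ) (j : Fin n) :
    cofactor (Emat a A) 0 j.succ = -a j * ∏ k ∈ Finset.univ.erase j, (A k - a k ^ 2) := by
  have hsign : (-1 : ℝ) ^ (j : ℕ) * (-1) ^ (j : ℕ) = 1 := by
    rw [← pow_add, Even.neg_one_pow ⟨j, rfl⟩]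
  rw [cofactor, det_Emat_submatrix_zero_succ, Fin.val_zero, Fin.val_succ, zero_add, pow_succ]
  linear_combination (-a j * ∏ k ∈ univ.erase j, (A k - a k ^ 2)) * hsign
end

section
/- For any real numbers a_1,…,a_n and A_1,…,A_n, and any index i with 1 ≤ i ≤ n, the cofactor C_{i+1,1} of the E_n-matrix equals −a_i · ∏_{j≠i} (A_j − a_j²), where the product is over j ∈ {1,…,n} with j ≠ i. -/
open Finset

/-!
Right multiplication by the unipotent matrix `[[1, -aᵀ], [0, 1]]` subtracts `a_j` times the first
column from column `j + 1`, turning the `E_n`-matrix into `[[1, 0], [a, D]]` with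
`D = diag (A_j - a_j²)`. The cofactor `C_{i+1,1}` is the adjugate entry `adj(E)_{1,i+1}`, i.e. the
determinant of `E` with row `i + 1` replaced by `e_1`. After the column operation that row becomes
`(1, -aᵀ)` while the first row becomes `e_1`, so the determinant is that of `D` with row `i` replaced
by `-aᵀ`, which is `-a_i ∏_{j ≠ i} (A_j - a_j²)`.
-/

open Matrix

theorem cofactor_eq_adjugate {n : ℕ} (M : Matrix (Fin (n + 1)) (Fin (n + 1)) ℝ)
    (k l : Fin (n + 1)) : cofactor M k l = adjugate M l k := by
  rw [cofactor, adjugate_fin_succ_eq_det_submatrix]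

namespace Matrix

theorem det_updateRow_diagonal {ι R : Type*} [Fintype ι] [DecidableEq ι] [CommRing R]
    (d v : ι → R) (i : ι) :
    ((diagonal d).updateRow i v).det = v i * ∏ j ∈ Finset.univ.erase i, d j := by
  rw [← det_transpose, ← updateCol_transpose, diagonal_transpose, ← cramer_apply,
    cramer_eq_adjugate_mulVec, adjugate_diagonal, mulVec_diagonal, mul_comm]

theorem det_eq_det_submatrix_succ_of_row_zero {n : ℕ} {R : Type*} [CommRing R]
    (X : Matrix (Fin (n + 1)) (Fin (n + 1)) R) (h : X 0 = Pi.single 0 1) :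
    X.det = (X.submatrix Fin.succ Fin.succ).det := by
  simp [det_succ_row_zero X, Fin.sum_univ_succ, h]

theorem submatrix_updateRow_of_injective {l m n o R : Type*} [DecidableEq l] [DecidableEq m]
    (A : Matrix m n R) {f : l → m} (hf : Function.Injective f) (g : o → n) (k : l)
    (v : n → R) :
    (A.updateRow (f k) v).submatrix f g = (A.submatrix f g).updateRow k (v ∘ g) := by
  ext r c
  simp [updateRow_apply, hf.eq_iff]

end Matrix

section ClearRowZero

variable {n : ℕ} {R : Type*} [CommRing R]

def clearRowZero (a : Fin n → R) : Matrix (Fin (n + 1)) (Fin (n + 1)) R :=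
  Matrix.of fun r c =>
    Fin.cases (Fin.cases 1 (fun c' => -a c') c)
      (fun r' => Fin.cases 0 (fun c' => (1 : Matrix (Fin n) (Fin n) R) r' c') c) r

theorem det_clearRowZero (a : Fin n → R) : (clearRowZero a).det = 1 := by
  rw [← det_transpose, det_eq_det_submatrix_succ_of_row_zero]
  · have h : (clearRowZero a)ᵀ.submatrix Fin.succ Fin.succ = 1 := by
      ext r c
      simp [clearRowZero, one_apply, eq_comm]
    rw [h, det_one]
  · ext c
    refine Fin.cases ?_ (fun c => ?_) c <;> simp [clearRowZero]

theorem det_mul_clearRowZero (a : Fin n → R) (X : Matrix (Fin (n + 1)) (Fin (n + 1)) R) :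
    (X * clearRowZero a).det = X.det := by
  rw [det_mul, det_clearRowZero, mul_one]

end ClearRowZero

theorem Emat_mul_clearRowZero_zero {n : ℕ} (a A : Fin n → ℝ) :
    (Emat a A * clearRowZero a) 0 = Pi.single 0 1 := by
  ext c
  refine Fin.cases ?_ (fun c => ?_) c <;>
    simp [Emat, clearRowZero, mul_apply, Fin.sum_univ_succ, one_apply]

theorem Emat_mul_clearRowZero_submatrix_succ {n : ℕ} (a A : Fin n → ℝ) :
    (Emat a A * clearRowZero a).submatrix Fin.succ Fin.succ =
      diagonal fun j => A j - a j ^ 2 := by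
  ext r c
  simp only [Emat, clearRowZero, one_apply, submatrix_apply, mul_apply, of_apply, Fin.cases_succ,
    Fin.sum_univ_succ, Fin.cases_zero, mul_neg, mul_ite, mul_one, mul_zero, sum_ite_eq', mem_univ,
    ↓reduceIte, diagonal_apply]
  split_ifs with h
  · subst h; ring
  · ring

/-- For `1 ≤ i ≤ n`, the cofactor `C_{i+1,1}` of the `E_n`-matrix equals
`−a_i · ∏_{j ≠ i} (A_j − a_j²)`. -/
theorem Emat_cofactor_succ_one {n : ℕ} (a A : Fin n → ℝ) (i : Fin n) :
    cofactor (Emat a A) i.succ 0 = -a i * ∏ j ∈ Finset.univ.erase i, (A j - a j ^ 2) := by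
  set U := clearRowZero a
  have hrow_zero : ((Emat a A * U).updateRow i.succ (U.row 0)) 0 = Pi.single 0 1 := by
    rw [updateRow_ne (Fin.succ_ne_zero i).symm, Emat_mul_clearRowZero_zero]
  have hrow_succ : U.row 0 ∘ Fin.succ = -a := by
    funext c
    simp [U, clearRowZero]
  rw [cofactor_eq_adjugate, adjugate_apply, ← det_mul_clearRowZero a, updateRow_mul,
    single_vecMul, one_smul, det_eq_det_submatrix_succ_of_row_zero _ hrow_zero,
    submatrix_updateRow_of_injective _ (Fin.succ_injective _),
    Emat_mul_clearRowZero_submatrix_succ, hrow_succ, det_updateRow_diagonal, Pi.neg_apply]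
end

section
/- For any real numbers a_1,…,a_n and A_1,…,A_n, the cofactor C_{1,1} of the E_n-matrix equals ∏_{k=1}^n (A_k − a_k²) + Σ_{k=1}^n a_k² · ∏_{j≠k} (A_j − a_j²), where the inner product is over j ∈ {1,…,n} with j ≠ k. -/
/-!
Deleting the first row and column of the `E_n`-matrix leaves `D + a aᵀ` with
`D = diag(A_k - a_k²)`. Expanding the determinant row by row, every term that takes the
rank-one part from two rows vanishes, so `det (D + u vᵀ) = det D + ∑_k u_k det D_k`, where
`D_k` is `D` with its `k`-th row replaced by `v`; for diagonal `D` this minor is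
`v_k ∏_{j ≠ k} d_j`.
-/

open Finset

namespace Matrix

variable {n R : Type*} [Fintype n] [DecidableEq n] [CommRing R]

theorem det_one_add_vecMulVec (u v : n → R) : det (1 + vecMulVec u v) = 1 + v ⬝ᵥ u := by
  rw [vecMulVec_eq Unit, det_one_add_replicateCol_mul_replicateRow]

/-- Once row `k` is `v`, subtracting `u i` times row `k` from every other row `i` removes the
rank-one part; this row operation is left multiplication by `1 + u' e_kᵀ` with `u' k = 0`. -/
theorem det_updateRow_add_vecMulVec (M : Matrix n n R) (u v : n → R) (k : n) :
    det ((M + vecMulVec u v).updateRow k v) = det (M.updateRow k v) := by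
  have hfactor : (M + vecMulVec u v).updateRow k v =
      (1 + vecMulVec (Function.update u k 0) (Pi.single k 1)) * M.updateRow k v := by
    ext i j
    by_cases hik : i = k <;> simp [hik, add_mul, vecMulVec_mul, vecMulVec_apply]
  rw [hfactor, det_mul, det_one_add_vecMulVec]
  simp

theorem det_add_vecMulVec_eq_add_sum (M : Matrix n n R) (u v : n → R) :
    det (M + vecMulVec u v) = det M + ∑ k, u k * det (M.updateRow k v) := by
  suffices hpartial : ∀ s : Finset n,
      det (M + vecMulVec (fun i => if i ∈ s then u i else 0) v) =
        det M + ∑ k ∈ s, u k * det (M.updateRow k v) by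
    simpa using hpartial univ
  intro s
  induction s using Finset.induction_on with
  | empty => simp [← Pi.zero_def]
  | insert i s hi ih =>
    set N := M + vecMulVec (fun j => if j ∈ s then u j else 0) v
    have hrow : M + vecMulVec (fun j => if j ∈ insert i s then u j else 0) v =
        N.updateRow i (N i + u i • v) := by
      ext j l
      by_cases hji : j = i <;> simp [N, vecMulVec_apply, hi, hji]
    rw [hrow, det_updateRow_add, updateRow_eq_self, det_updateRow_smul,
      det_updateRow_add_vecMulVec, ih, sum_insert hi]
    ring

theorem det_diagonal_updateRow (d v : n → R) (k : n) :
    det ((diagonal d).updateRow k v) = v k * ∏ j ∈ univ.erase k, d j := by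
  rw [← cramer_transpose_apply, diagonal_transpose, cramer_eq_adjugate_mulVec,
    adjugate_diagonal, mulVec_diagonal, mul_comm]

theorem det_diagonal_add_vecMulVec (d u v : n → R) :
    det (diagonal d + vecMulVec u v) =
      ∏ k, d k + ∑ k, u k * v k * ∏ j ∈ univ.erase k, d j := by
  simp only [det_add_vecMulVec_eq_add_sum, det_diagonal, det_diagonal_updateRow, mul_assoc]

end Matrix

theorem Emat_submatrix_succ_succ {n : ℕ} (a A : Fin n → ℝ) :
    (Emat a A).submatrix Fin.succ Fin.succ =
      Matrix.diagonal (fun i => A i - a i ^ 2) + Matrix.vecMulVec a a := by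
  ext i j
  by_cases hij : i = j
  · subst hij
    simp [Emat, Matrix.vecMulVec_apply, sq]
  · simp [Emat, Matrix.vecMulVec_apply, hij]

/-- The cofactor `C_{1,1}` of the `E_n`-matrix equals
`∏_{k=1}^n (A_k − a_k²) + Σ_{k=1}^n a_k² · ∏_{j≠k} (A_j − a_j²)`. -/
theorem Emat_cofactor_one_one {n : ℕ} (a A : Fin n → ℝ) :
    cofactor (Emat a A) 0 0 =
      (∏ k : Fin n, (A k - a k ^ 2)) +
        ∑ k : Fin n, a k ^ 2 * ∏ j ∈ Finset.univ.erase k, (A j - a j ^ 2) := by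
  rw [cofactor, Fin.succAbove_zero, Emat_submatrix_succ_succ,
    Matrix.det_diagonal_add_vecMulVec]
  simp [sq]
end

section
/- Let p ≥ 1 and let μ_1,…,μ_p, s_1,…,s_p, x_1,…,x_p, r̃ be real numbers with σ_j² := s_j − μ_j² ≠ 0 for each j. Then the (p+1)-vector (v_0, v_1, …, v_p) given by v_0 = r̃·[1 − p + Σ_{j=1}^p (s_j − x_j μ_j)/σ_j²] and v_j = r̃·(x_j − μ_j)/σ_j² for 1 ≤ j ≤ p is the unique solution of the linear system: v_0 + Σ_{j=1}^p v_j μ_j = r̃, and for each i ∈ {1,…,p}: v_0 μ_i + v_i s_i + Σ_{j≠i} v_j μ_i μ_j = x_i r̃. -/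
/-!
Row `i` of the system is `μ i` times row `0` plus `v i * σᵢ²`: the diagonal term missing from the
sum is what turns `v i * s i` into `v i * μ i ^ 2 + v i * σᵢ²`. So, given row `0`, row `i` says
`v i * σᵢ² = r * (x i - μ i)`, which fixes `v i`, and row `0` then fixes `v 0`.
-/

open Finset

section InfluenceSystem

variable {ι : Type*} [Fintype ι] (μ s : ι → ℝ)

theorem mul_add_mul_add_sum_erase_eq [DecidableEq ι] (w₀ : ℝ) (w : ι → ℝ) (i : ι) :
    w₀ * μ i + w i * s i + ∑ j ∈ univ.erase i, w j * μ i * μ j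
      = μ i * (w₀ + ∑ j, w j * μ j) + w i * (s i - μ i ^ 2) := by
  have hfactor : ∑ j, w j * μ i * μ j = μ i * ∑ j, w j * μ j := by
    rw [mul_sum]
    exact sum_congr rfl fun j _ => by ring
  rw [sum_erase_eq_sub (mem_univ i)]
  linear_combination hfactor

variable {μ s}

theorem sub_sum_influence_mul_eq (hσ : ∀ j, s j - μ j ^ 2 ≠ 0) (x : ι → ℝ) (r : ℝ) :
    r - ∑ j, r * (x j - μ j) / (s j - μ j ^ 2) * μ j
      = r * (1 - Fintype.card ι + ∑ j, (s j - x j * μ j) / (s j - μ j ^ 2)) := by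
  have hterm : ∀ j, (s j - x j * μ j) / (s j - μ j ^ 2) = 1 - (x j - μ j) / (s j - μ j ^ 2) * μ j :=
    fun j => by field_simp [hσ j]; ring
  have hfactor : ∑ j, r * (x j - μ j) / (s j - μ j ^ 2) * μ j
      = r * ∑ j, (x j - μ j) / (s j - μ j ^ 2) * μ j := by
    rw [mul_sum]
    exact sum_congr rfl fun j _ => by ring
  simp only [hterm, sum_sub_distrib, sum_const, card_univ, nsmul_eq_mul, mul_one, hfactor]
  ring

theorem influence_system_iff [DecidableEq ι] (hσ : ∀ j, s j - μ j ^ 2 ≠ 0) (x : ι → ℝ) (r : ℝ)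
    (w₀ : ℝ) (w : ι → ℝ) :
    (w₀ + ∑ j, w j * μ j = r ∧
        ∀ i, w₀ * μ i + w i * s i + ∑ j ∈ univ.erase i, w j * μ i * μ j = x i * r) ↔
      w₀ = r * (1 - Fintype.card ι + ∑ j, (s j - x j * μ j) / (s j - μ j ^ 2)) ∧
        ∀ j, w j = r * (x j - μ j) / (s j - μ j ^ 2) := by
  simp only [mul_add_mul_add_sum_erase_eq]
  constructor
  · rintro ⟨h₀, hᵢ⟩
    have hw : ∀ j, w j = r * (x j - μ j) / (s j - μ j ^ 2) := fun j => by
      rw [eq_div_iff (hσ j)]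
      linear_combination hᵢ j - μ j * h₀
    obtain rfl := funext hw
    exact ⟨by linear_combination h₀ + sub_sum_influence_mul_eq hσ x r, hw⟩
  · rintro ⟨rfl, hw⟩
    obtain rfl := funext hw
    have h₀ := sub_sum_influence_mul_eq hσ x r
    refine ⟨by linear_combination -h₀, fun i => ?_⟩
    rw [div_mul_cancel₀ _ (hσ i)]
    linear_combination -μ i * h₀

end InfluenceSystem

theorem influence_system_unique_solution_general
    (p : ℕ) (μ s x : Fin p → ℝ) (r : ℝ)
    (hσ : ∀ j, s j - μ j ^ 2 ≠ 0) :
    (((r * ((1 : ℝ) - (p : ℝ) + ∑ j, (s j - x j * μ j) / (s j - μ j ^ 2))) +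
        ∑ j, (r * (x j - μ j) / (s j - μ j ^ 2)) * μ j = r) ∧
      (∀ i, (r * ((1 : ℝ) - (p : ℝ) + ∑ j, (s j - x j * μ j) / (s j - μ j ^ 2))) * μ i +
          (r * (x i - μ i) / (s i - μ i ^ 2)) * s i +
          ∑ j ∈ Finset.univ.erase i, (r * (x j - μ j) / (s j - μ j ^ 2)) * μ i * μ j
        = x i * r)) ∧
    (∀ (w₀ : ℝ) (w : Fin p → ℝ),
      (w₀ + ∑ j, w j * μ j = r ∧
        ∀ i, w₀ * μ i + w i * s i + ∑ j ∈ Finset.univ.erase i, w j * μ i * μ j = x i * r) →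
      w₀ = r * ((1 : ℝ) - (p : ℝ) + ∑ j, (s j - x j * μ j) / (s j - μ j ^ 2)) ∧
        ∀ j, w j = r * (x j - μ j) / (s j - μ j ^ 2)) := by
  have h := influence_system_iff hσ x r
  simp only [Fintype.card_fin] at h
  exact ⟨(h _ _).2 ⟨rfl, fun _ => rfl⟩, fun w₀ w => (h w₀ w).1⟩

/-- For `p ≥ 1` and real numbers `μ_j, s_j, x_j, r̃` with `σ_j² = s_j − μ_j² ≠ 0`, the vector
`(v_0, v_1, …, v_p)` with `v_0 = r̃·[1 − p + Σ_j (s_j − x_j μ_j)/σ_j²]` and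
`v_j = r̃·(x_j − μ_j)/σ_j²` is the unique solution of the linear system
`v_0 + Σ_j v_j μ_j = r̃` and, for each `i`, `v_0 μ_i + v_i s_i + Σ_{j≠i} v_j μ_i μ_j = x_i r̃`. -/
theorem influence_system_unique_solution
    (p : ℕ) (hp : 1 ≤ p) (μ s x : Fin p → ℝ) (r : ℝ)
    (hσ : ∀ j, s j - μ j ^ 2 ≠ 0) :
    (((r * ((1 : ℝ) - (p : ℝ) + ∑ j, (s j - x j * μ j) / (s j - μ j ^ 2))) +
        ∑ j, (r * (x j - μ j) / (s j - μ j ^ 2)) * μ j = r) ∧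
      (∀ i, (r * ((1 : ℝ) - (p : ℝ) + ∑ j, (s j - x j * μ j) / (s j - μ j ^ 2))) * μ i +
          (r * (x i - μ i) / (s i - μ i ^ 2)) * s i +
          ∑ j ∈ Finset.univ.erase i, (r * (x j - μ j) / (s j - μ j ^ 2)) * μ i * μ j
        = x i * r)) ∧
    (∀ (w₀ : ℝ) (w : Fin p → ℝ),
      (w₀ + ∑ j, w j * μ j = r ∧
        ∀ i, w₀ * μ i + w i * s i + ∑ j ∈ Finset.univ.erase i, w j * μ i * μ j = x i * r) →
      w₀ = r * ((1 : ℝ) - (p : ℝ) + ∑ j, (s j - x j * μ j) / (s j - μ j ^ 2)) ∧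
        ∀ j, w j = r * (x j - μ j) / (s j - μ j ^ 2)) :=
  influence_system_unique_solution_general p μ s x r hσ
end

section
/- Let p ≥ 1, let μ_1,…,μ_p, s_1,…,s_p, β_0, β_1,…,β_p, y be real numbers with σ_j² := s_j − μ_j² ≠ 0 for each j, and define on ℝ^p: r_2(x) = y − β_0 − Σ_{j=1}^p β_j x_j, IF_0(x) = r_2(x)·[1 − p + Σ_{j=1}^p (s_j − x_j μ_j)/σ_j²], and IF_j(x) = r_2(x)·(x_j − μ_j)/σ_j² for 1 ≤ j ≤ p. Then for every x ∈ ℝ^p and every i ∈ {1,…,p}: IF_i(x) + ∂IF_0/∂x_i(x) + Σ_{j=1}^p x_j · ∂IF_j/∂x_i(x) = 2·r_2(x)·(x_i − μ_i)/σ_i² − β_i·[1 + Σ_{j=1}^p (x_j − μ_j)²/σ_j²]. -/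
/-!
The left-hand side is the `i`-th partial derivative of `Φ = IF₀ + ∑ⱼ xⱼ IFⱼ` (product rule, with
`∂xⱼ/∂xᵢ = δᵢⱼ`). Since `(sⱼ - xⱼμⱼ + xⱼ(xⱼ - μⱼ))/σⱼ² = 1 + (xⱼ - μⱼ)²/σⱼ²`, the `p` ones cancel
the `1 - p` and `Φ = r₂ · (1 + ∑ⱼ (xⱼ - μⱼ)²/σⱼ²)`; differentiating this product gives the
right-hand side.
-/

open Finset

section
variable {ι : Type*} [Fintype ι] [DecidableEq ι]

theorem fderiv_add_sum_coord_mul_apply_single {f₀ : (ι → ℝ) → ℝ} {f : ι → (ι → ℝ) → ℝ}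
    {x : ι → ℝ} (hf₀ : DifferentiableAt ℝ f₀ x) (hf : ∀ j, DifferentiableAt ℝ (f j) x) (i : ι) :
    fderiv ℝ (fun x => f₀ x + ∑ j, x j * f j x) x (Pi.single i 1)
      = f i x + fderiv ℝ f₀ x (Pi.single i 1) + ∑ j, x j * fderiv ℝ (f j) x (Pi.single i 1) := by
  have h : HasFDerivAt (fun x => f₀ x + ∑ j, x j * f j x)
      (fderiv ℝ f₀ x + ∑ j, (x j • fderiv ℝ (f j) x
        + f j x • (ContinuousLinearMap.proj j : (ι → ℝ) →L[ℝ] ℝ))) x :=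
    hf₀.hasFDerivAt.add (HasFDerivAt.fun_sum fun j _ =>
      (hasFDerivAt_apply j x).mul (hf j).hasFDerivAt)
  simp [h.fderiv, Pi.single_apply, sum_add_distrib]
  ring

theorem fderiv_const_sub_sum_mul_apply_single (c : ℝ) (a x : ι → ℝ) (i : ι) :
    fderiv ℝ (fun x : ι → ℝ => c - ∑ j, a j * x j) x (Pi.single i 1) = -a i := by
  have h : HasFDerivAt (fun x : ι → ℝ => c - ∑ j, a j * x j)
      (0 - ∑ j, a j • (ContinuousLinearMap.proj j : (ι → ℝ) →L[ℝ] ℝ)) x :=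
    (hasFDerivAt_const c x).sub (HasFDerivAt.fun_sum fun j _ =>
      (hasFDerivAt_apply j x).const_mul (a j))
  simp [h.fderiv, Pi.single_apply]

theorem fderiv_one_add_sum_sq_div_apply_single (m d x : ι → ℝ) (i : ι) :
    fderiv ℝ (fun x : ι → ℝ => 1 + ∑ j, (x j - m j) ^ 2 / d j) x (Pi.single i 1)
      = 2 * (x i - m i) / d i := by
  have h : HasFDerivAt (fun x : ι → ℝ => 1 + ∑ j, (x j - m j) ^ 2 / d j)
      (0 + ∑ j, (d j)⁻¹ • (2 * (x j - m j)) • (ContinuousLinearMap.proj j : (ι → ℝ) →L[ℝ] ℝ))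
      x := by
    refine (hasFDerivAt_const 1 x).add (HasFDerivAt.fun_sum fun j _ => ?_)
    simpa [div_eq_inv_mul] using
      (((hasFDerivAt_apply j x).sub_const (m j)).pow 2).const_mul (d j)⁻¹
  simp [h.fderiv, Pi.single_apply]
  ring

end

section
variable {ι : Type*} [Fintype ι] {μ s : ι → ℝ}

theorem sum_div_add_sum_mul_div_eq_card_add_sum_sq_div (hσ : ∀ j, s j - μ j ^ 2 ≠ 0)
    (x : ι → ℝ) :
    ∑ j, (s j - x j * μ j) / (s j - μ j ^ 2) + ∑ j, x j * (x j - μ j) / (s j - μ j ^ 2)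
      = Fintype.card ι + ∑ j, (x j - μ j) ^ 2 / (s j - μ j ^ 2) := by
  have hterm : ∀ j, (s j - x j * μ j) / (s j - μ j ^ 2) + x j * (x j - μ j) / (s j - μ j ^ 2)
      = 1 + (x j - μ j) ^ 2 / (s j - μ j ^ 2) := fun j => by
    field_simp [hσ j]
    ring
  rw [← sum_add_distrib, sum_congr rfl fun j _ => hterm j, sum_add_distrib]
  simp

theorem mul_one_sub_card_add_sum_mul_div_eq (hσ : ∀ j, s j - μ j ^ 2 ≠ 0) (r : ℝ)
    (x : ι → ℝ) :
    r * (1 - Fintype.card ι + ∑ j, (s j - x j * μ j) / (s j - μ j ^ 2))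
        + ∑ j, x j * (r * (x j - μ j) / (s j - μ j ^ 2))
      = r * (1 + ∑ j, (x j - μ j) ^ 2 / (s j - μ j ^ 2)) := by
  have hsum : ∑ j, x j * (r * (x j - μ j) / (s j - μ j ^ 2))
      = r * ∑ j, x j * (x j - μ j) / (s j - μ j ^ 2) := by
    rw [mul_sum]
    exact sum_congr rfl fun j _ => by ring
  rw [hsum]
  linear_combination r * sum_div_add_sum_mul_div_eq_card_add_sum_sq_div hσ x

end

theorem L2_influence_derivative_sum_general
    (p : ℕ) (μ s : Fin p → ℝ) (β₀ y : ℝ) (β : Fin p → ℝ)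
    (hσ : ∀ j, s j - μ j ^ 2 ≠ 0)
    (r₂ : (Fin p → ℝ) → ℝ)
    (hr₂ : ∀ x, r₂ x = y - β₀ - ∑ j, β j * x j)
    (IF₀ : (Fin p → ℝ) → ℝ) (IF : Fin p → (Fin p → ℝ) → ℝ)
    (hIF₀ : ∀ x, IF₀ x = r₂ x * ((1 : ℝ) - (p : ℝ) + ∑ j, (s j - x j * μ j) / (s j - μ j ^ 2)))
    (hIF : ∀ j x, IF j x = r₂ x * (x j - μ j) / (s j - μ j ^ 2)) :
    ∀ (x : Fin p → ℝ) (i : Fin p),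
      IF i x + fderiv ℝ IF₀ x (Pi.single i 1) + ∑ j, x j * fderiv ℝ (IF j) x (Pi.single i 1)
        = 2 * r₂ x * (x i - μ i) / (s i - μ i ^ 2)
          - β i * (1 + ∑ j, (x j - μ j) ^ 2 / (s j - μ j ^ 2)) := by
  intro x i
  have hr₂_eq : r₂ = fun x => y - β₀ - ∑ j, β j * x j := funext hr₂
  have hr₂_diff : Differentiable ℝ r₂ := by rw [hr₂_eq]; fun_prop
  have hIF₀_diff : Differentiable ℝ IF₀ := by rw [funext hIF₀]; fun_prop
  have hIF_diff : ∀ j, Differentiable ℝ (IF j) := fun j => by rw [funext (hIF j)]; fun_prop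
  have hcombined : (fun x => IF₀ x + ∑ j, x j * IF j x)
      = fun x => r₂ x * (1 + ∑ j, (x j - μ j) ^ 2 / (s j - μ j ^ 2)) := funext fun x => by
    simpa [hIF₀, hIF] using mul_one_sub_card_add_sum_mul_div_eq hσ (r₂ x) x
  have hr₂_partial : fderiv ℝ r₂ x (Pi.single i 1) = -β i := by
    rw [hr₂_eq]
    exact fderiv_const_sub_sum_mul_apply_single _ β x i
  rw [← fderiv_add_sum_coord_mul_apply_single (hIF₀_diff x) (fun j => hIF_diff j x) i,
    hcombined, fderiv_fun_mul (hr₂_diff x) (by fun_prop)]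
  simp only [add_apply, smul_apply, smul_eq_mul, hr₂_partial,
    fderiv_one_add_sum_sq_div_apply_single]
  ring

/-- For the `L_2`-regression influence functions `IF_0(x) = r_2(x)·[1 − p + Σ_j (s_j − x_j μ_j)/σ_j²]`
and `IF_j(x) = r_2(x)·(x_j − μ_j)/σ_j²`, with `r_2(x) = y − β_0 − Σ_j β_j x_j`, one has, for
every `x` and every `i`, `IF_i(x) + ∂IF_0/∂x_i(x) + Σ_j x_j · ∂IF_j/∂x_i(x)
= 2·r_2(x)·(x_i − μ_i)/σ_i² − β_i·[1 + Σ_j (x_j − μ_j)²/σ_j²]`. -/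
theorem L2_influence_derivative_sum
    (p : ℕ) (hp : 1 ≤ p) (μ s : Fin p → ℝ) (β₀ y : ℝ) (β : Fin p → ℝ)
    (hσ : ∀ j, s j - μ j ^ 2 ≠ 0)
    (r₂ : (Fin p → ℝ) → ℝ)
    (hr₂ : ∀ x, r₂ x = y - β₀ - ∑ j, β j * x j)
    (IF₀ : (Fin p → ℝ) → ℝ) (IF : Fin p → (Fin p → ℝ) → ℝ)
    (hIF₀ : ∀ x, IF₀ x = r₂ x * ((1 : ℝ) - (p : ℝ) + ∑ j, (s j - x j * μ j) / (s j - μ j ^ 2)))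
    (hIF : ∀ j x, IF j x = r₂ x * (x j - μ j) / (s j - μ j ^ 2)) :
    ∀ (x : Fin p → ℝ) (i : Fin p),
      IF i x + fderiv ℝ IF₀ x (Pi.single i 1) + ∑ j, x j * fderiv ℝ (IF j) x (Pi.single i 1)
        = 2 * r₂ x * (x i - μ i) / (s i - μ i ^ 2)
          - β i * (1 + ∑ j, (x j - μ j) ^ 2 / (s j - μ j ^ 2)) :=
  L2_influence_derivative_sum_general p μ s β₀ y β hσ r₂ hr₂ IF₀ IF hIF₀ hIF
end

section
/- Let p ≥ 1, ε > 0, and let μ_1,…,μ_p, s_1,…,s_p, β_0, β_1,…,β_p, y be real numbers with σ_j² := s_j − μ_j² > 0 for each j. Define for x ∈ ℝ^p: r_2(x) = y − β_0 − Σ_{j=1}^p β_j x_j and RINFIN(x) = ε · Σ_{i=1}^p | 2·r_2(x)·(x_i − μ_i)/σ_i² − β_i·[1 + Σ_{j=1}^p (x_j − μ_j)²/σ_j²] |. Fix an index i with β_i ≠ 0 and fix all coordinates x_j with j ≠ i. Then RINFIN(x) tends to +∞ as |x_i| → ∞ (i.e., the function t ↦ RINFIN of the point whose i-th coordinate is t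 tends to +∞ along the filter where |t| → ∞). -/
/-!
`RINFIN / ε` is bounded below by its `i`-th summand alone. Along the line `t ↦ x + t eᵢ` this
summand is a quadratic polynomial in `t` whose leading coefficient is `-3 βᵢ / σᵢ² ≠ 0`
(`-2 βᵢ / σᵢ²` from the residual times `xᵢ - μᵢ`, `-βᵢ / σᵢ²` from the bracket), and the absolute
value of a nonconstant polynomial tends to infinity with `|t|`.
-/

open Finset Filter Function Polynomial

lemma tendsto_abs_quadratic_comap_abs_atTop {a : ℝ} (ha : a ≠ 0) (b c : ℝ) :
    Tendsto (fun t : ℝ => |a * t ^ 2 + b * t + c|) (comap (fun t : ℝ => |t|) atTop) atTop := by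
  have hdeg : 0 < degree (C a * X ^ 2 + C b * X + C c) := by
    rw [degree_quadratic ha]
    norm_num
  convert (C a * X ^ 2 + C b * X + C c).tendsto_abv_atTop abs hdeg (z := id) tendsto_comap
    using 2 <;> simp

lemma sum_apply_update_eq_add_sum_erase {ι α M : Type*} [Fintype ι] [DecidableEq ι]
    [AddCommMonoid M] (f : ι → α → M) (x : ι → α) (i : ι) (v : α) :
    ∑ j, f j (update x i v j) = f i v + ∑ j ∈ univ.erase i, f j (x j) := by
  simp_rw [apply_update f, sum_update_of_mem (mem_univ i), sdiff_singleton_eq_erase]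

lemma exists_residual_influence_term_update_eq_quadratic {ι : Type*} [Fintype ι] [DecidableEq ι]
    (μ s β x : ι → ℝ) (β₀ y : ℝ) {i : ι} (hσ : s i - μ i ^ 2 ≠ 0) :
    ∃ b c : ℝ, ∀ t : ℝ,
      2 * (y - β₀ - ∑ j, β j * update x i t j) * (update x i t i - μ i) / (s i - μ i ^ 2)
        - β i * (1 + ∑ j, (update x i t j - μ j) ^ 2 / (s j - μ j ^ 2))
      = -3 * β i / (s i - μ i ^ 2) * t ^ 2 + b * t + c := by
  set K := y - β₀ - ∑ j ∈ univ.erase i, β j * x j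
  set S := ∑ j ∈ univ.erase i, (x j - μ j) ^ 2 / (s j - μ j ^ 2)
  refine ⟨(2 * K + 4 * β i * μ i) / (s i - μ i ^ 2),
    (-2 * K * μ i - β i * μ i ^ 2) / (s i - μ i ^ 2) - β i * (1 + S), fun t => ?_⟩
  rw [sum_apply_update_eq_add_sum_erase (fun j u => β j * u),
    sum_apply_update_eq_add_sum_erase (fun j u => (u - μ j) ^ 2 / (s j - μ j ^ 2)), update_self]
  simp only [K, S]
  field_simp
  ring

theorem RINFIN_tendsto_atTop_general
    (p : ℕ) (ε : ℝ) (hε : 0 < ε)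
    (μ s : Fin p → ℝ) (β₀ y : ℝ) (β : Fin p → ℝ)
    (hσ : ∀ j, 0 < s j - μ j ^ 2)
    (r₂ : (Fin p → ℝ) → ℝ)
    (hr₂ : ∀ x, r₂ x = y - β₀ - ∑ j, β j * x j)
    (RINFIN : (Fin p → ℝ) → ℝ)
    (hR : ∀ x, RINFIN x = ε * ∑ i,
      |2 * r₂ x * (x i - μ i) / (s i - μ i ^ 2)
        - β i * (1 + ∑ j, (x j - μ j) ^ 2 / (s j - μ j ^ 2))|)
    (i : Fin p) (hβ : β i ≠ 0) (x : Fin p → ℝ) :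
    Tendsto (fun t : ℝ => RINFIN (Function.update x i t))
      (comap (fun t : ℝ => |t|) atTop) atTop := by
  have hsingle : ∀ z, ε * |2 * r₂ z * (z i - μ i) / (s i - μ i ^ 2)
      - β i * (1 + ∑ j, (z j - μ j) ^ 2 / (s j - μ j ^ 2))| ≤ RINFIN z := by
    intro z
    rw [hR]
    gcongr
    apply single_le_sum (fun k _ => abs_nonneg _) (mem_univ i)
  obtain ⟨b, c, hquadratic⟩ :=
    exists_residual_influence_term_update_eq_quadratic μ s β x β₀ y (hσ i).ne'
  refine tendsto_atTop_mono (fun t => hsingle (update x i t)) (Tendsto.const_mul_atTop hε ?_)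
  simp only [hr₂, hquadratic]
  exact tendsto_abs_quadratic_comap_abs_atTop (div_ne_zero (by simpa using hβ) (hσ i).ne') b c

/-- With `r_2(x) = y − β_0 − Σ_j β_j x_j` and
`RINFIN(x) = ε · Σ_i |2·r_2(x)·(x_i − μ_i)/σ_i² − β_i·[1 + Σ_j (x_j − μ_j)²/σ_j²]|`,
if `β_i ≠ 0` and all coordinates `x_j`, `j ≠ i`, are fixed, then `RINFIN` tends to `+∞` as
`|x_i| → ∞`. -/
theorem RINFIN_tendsto_atTop
    (p : ℕ) (hp : 1 ≤ p) (ε : ℝ) (hε : 0 < ε)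
    (μ s : Fin p → ℝ) (β₀ y : ℝ) (β : Fin p → ℝ)
    (hσ : ∀ j, 0 < s j - μ j ^ 2)
    (r₂ : (Fin p → ℝ) → ℝ)
    (hr₂ : ∀ x, r₂ x = y - β₀ - ∑ j, β j * x j)
    (RINFIN : (Fin p → ℝ) → ℝ)
    (hR : ∀ x, RINFIN x = ε * ∑ i,
      |2 * r₂ x * (x i - μ i) / (s i - μ i ^ 2)
        - β i * (1 + ∑ j, (x j - μ j) ^ 2 / (s j - μ j ^ 2))|)
    (i : Fin p) (hβ : β i ≠ 0) (x : Fin p → ℝ) :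
    Tendsto (fun t : ℝ => RINFIN (Function.update x i t))
      (comap (fun t : ℝ => |t|) atTop) atTop :=
  RINFIN_tendsto_atTop_general p ε hε μ s β₀ y β hσ r₂ hr₂ RINFIN hR i hβ x
end
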